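/- Let T > 0, c > 0, n a positive integer, and let f : [0,T] → ℝ be càdlàg. Set t_i^n := iT/n for i = 0,1,…,n, and for t ∈ [0,T] let k(t) be the largest index i with t_i^n ≤ t; define ATV^{n,c}(t) := Σ_{i=0}^{k(t)−1} TV^c(f,[t_i^n, t_{i+1}^n]) + TV^c(f,[t_{k(t)}^n, t]). Then for every t ∈ [0,T], ATV^{n,c}(t) ≤ TV^c(f,[0,t]) ≤ ATV^{n,c}(t) + nc; in particular, for fixed n, sup_{t∈[0,T]} |TV^c(f,[0,t]) − ATV^{n,c}(t)| → 0 as c ↘ 0. -/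

import Mathlib

/-!
Cutting a partition of `[a, b]` at a point `m` splits every increment except the one straddling
`m`, and by the triangle inequality that one increment loses at most `c` under truncation, while
concatenating partitions of `[a, m]` and `[m, b]` gives one of `[a, b]`. Hence
`TV^c[a,m] + TV^c[m,b] ≤ TV^c[a,b] ≤ TV^c[a,m] + TV^c[m,b] + c`, and iterating this over the
at most `n` grid points `iT/n ≤ t` gives `ATV^{n,c}(t) ≤ TV^c[0,t] ≤ ATV^{n,c}(t) + nc`.
-/

open MeasureTheory ProbabilityTheory Filter Set
open scoped ENNReal NNReal Topology

noncomputable section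

/-- Truncated variation of `f` on `[a,b]` with threshold `c`:
`sup` over finite nondecreasing sequences in `[a,b]` of `∑ max(|f(t_{i+1}) - f(t_i)| - c, 0)`. -/
def TV (f : ℝ → ℝ) (a b c : ℝ) : ℝ≥0∞ :=
  ⨆ (n : ℕ) (t : Fin (n + 1) → ℝ) (_ : Monotone t) (_ : ∀ i, t i ∈ Set.Icc a b),
    ∑ i : Fin n, ENNReal.ofReal (|f (t i.succ) - f (t i.castSucc)| - c)

/-- Upward truncated variation of `f` on `[a,b]` with threshold `c`:
`sup` over interleaved sequences `a ≤ t_1 ≤ s_1 ≤ t_2 ≤ … ≤ s_n ≤ b` of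
`∑ max(f(s_i) - f(t_i) - c, 0)`. -/
def UTV (f : ℝ → ℝ) (a b c : ℝ) : ℝ≥0∞ :=
  ⨆ (n : ℕ) (t : Fin n → ℝ) (s : Fin n → ℝ)
    (_ : ∀ i, a ≤ t i ∧ t i ≤ s i ∧ s i ≤ b)
    (_ : ∀ i j, i < j → s i ≤ t j),
    ∑ i : Fin n, ENNReal.ofReal (f (s i) - f (t i) - c)

/-- Downward truncated variation of `f` on `[a,b]` with threshold `c`. -/
def DTV (f : ℝ → ℝ) (a b c : ℝ) : ℝ≥0∞ := UTV (fun x => - f x) a b c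

/-- A standard one-dimensional Brownian motion started at `0`, under the measure `P`:
measurable in `ω`, continuous paths, `W 0 = 0`, Gaussian increments with variance `t - s`,
and independent increments. -/
structure IsBrownian {Ω : Type*} [MeasurableSpace Ω] (P : Measure Ω) (W : ℝ → Ω → ℝ) :
    Prop where
  meas : ∀ t, Measurable (W t)
  init : ∀ ω, W 0 ω = 0
  cont : ∀ ω, Continuous fun t => W t ω
  gauss : ∀ s t : ℝ, 0 ≤ s → s ≤ t →
    Measure.map (fun ω => W t ω - W s ω) P = gaussianReal 0 (Real.toNNReal (t - s))
  indep : ∀ (n : ℕ) (τ : Fin (n + 1) → ℝ), Monotone τ → (∀ i, 0 ≤ τ i) →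
    iIndepFun
      (fun (i : Fin n) ω => W (τ i.succ) ω - W (τ i.castSucc) ω) P

/-- A càdlàg function on `[a,b]`: right-continuous on `[a,b)` and with left limits on `(a,b]`. -/
def Cadlag (f : ℝ → ℝ) (a b : ℝ) : Prop :=
  (∀ x ∈ Set.Ico a b, ContinuousWithinAt f (Set.Ici x) x) ∧
  (∀ x ∈ Set.Ioc a b, ∃ L : ℝ, Tendsto f (𝓝[<] x) (𝓝 L))

/-- The approximated truncated variation: with `t_i = iT/n` and `k(t) = ⌊nt/T⌋` the largest
index with `t_i ≤ t`, `ATV^{n,c}(t) = ∑_{i<k(t)} TV^c(f,[t_i,t_{i+1}]) + TV^c(f,[t_{k(t)},t])`. -/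
def ATV (f : ℝ → ℝ) (T : ℝ) (n : ℕ) (c t : ℝ) : ℝ≥0∞ :=
  (∑ i ∈ Finset.range (Nat.floor (n * t / T)),
    TV f (i * T / n) ((i + 1) * T / n) c)
  + TV f ((Nat.floor (n * t / T) : ℝ) * T / n) t c

open Finset

theorem Monotone.fin_append {α : Type*} [Preorder α] {n p : ℕ} {t : Fin (n + 1) → α}
    {s : Fin (p + 1) → α} (ht : Monotone t) (hs : Monotone s) (hts : t (Fin.last n) ≤ s 0) :
    Monotone (Fin.append t s) := by
  intro i j hij
  cases i using Fin.addCases with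
  | left i =>
    cases j using Fin.addCases with
    | left j => simpa using ht (Fin.le_def.mpr (Fin.le_def.mp hij))
    | right j =>
      simpa using (ht (Fin.le_last i)).trans (hts.trans (hs (Fin.zero_le j)))
  | right i =>
    cases j using Fin.addCases with
    | left j => exact absurd hij (by simp [Fin.le_def]; omega)
    | right j => simpa using hs (by simpa using hij)

theorem Fin.append_mem {α : Type*} {n p : ℕ} {t : Fin n → α} {s : Fin p → α} {S : Set α}
    (ht : ∀ i, t i ∈ S) (hs : ∀ i, s i ∈ S) (i : Fin (n + p)) : Fin.append t s i ∈ S := by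
  cases i using Fin.addCases <;> simp [ht, hs]

theorem sum_add_sum_le_sum_append {α M : Type*} [AddCommMonoid M] [PartialOrder M]
    [CanonicallyOrderedAdd M] {n p : ℕ} (g : α → α → M) (t : Fin (n + 1) → α)
    (s : Fin (p + 1) → α) :
    ∑ i : Fin n, g (t i.succ) (t i.castSucc) + ∑ i : Fin p, g (s i.succ) (s i.castSucc) ≤
      ∑ i : Fin (n + 1 + p), g (Fin.append t s i.succ) (Fin.append t s i.castSucc) := by
  have left_castSucc (i : Fin (n + 1)) : Fin.append t s (Fin.castAdd p i).castSucc = t i :=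
    Fin.append_left t s i
  have left_succ (i : Fin n) : Fin.append t s (Fin.castAdd p i.castSucc).succ = t i.succ :=
    Fin.append_left t s i.succ
  have right_castSucc (i : Fin (p + 1)) : Fin.append t s (Fin.natAdd (n + 1) i) = s i :=
    Fin.append_right t s i
  have right_succ (i : Fin p) : Fin.append t s (Fin.natAdd (n + 1) i).succ = s i.succ :=
    Fin.append_right t s i.succ
  rw [Fin.sum_univ_add, Fin.sum_univ_castSucc]
  simp only [left_castSucc, left_succ, Fin.castSucc_natAdd, right_castSucc, right_succ]
  exact add_le_add le_self_add le_rfl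

theorem card_filter_lt_lt_le_one {α : Type*} [Preorder α] [DecidableLT α] {n : ℕ}
    {t : Fin (n + 1) → α} (ht : Monotone t) (m : α) :
    #{i : Fin n | t i.castSucc < m ∧ m < t i.succ} ≤ 1 := by
  refine card_le_one.mpr fun i hi j hj => ?_
  simp only [mem_filter, Finset.mem_univ, true_and] at hi hj
  by_contra hij
  rcases lt_or_gt_of_ne hij with h | h
  · exact lt_irrefl m ((hi.2.trans_le (ht (Fin.succ_le_castSucc_iff.mpr h))).trans hj.1)
  · exact lt_irrefl m ((hj.2.trans_le (ht (Fin.succ_le_castSucc_iff.mpr h))).trans hi.1)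

theorem ENNReal.ofReal_abs_sub_sub_le (x y z c : ℝ) :
    ENNReal.ofReal (|z - x| - c) ≤
      ENNReal.ofReal (|y - x| - c) + ENNReal.ofReal (|z - y| - c) + ENNReal.ofReal c := by
  calc ENNReal.ofReal (|z - x| - c)
      ≤ ENNReal.ofReal ((|y - x| - c) + (|z - y| - c) + c) :=
        ENNReal.ofReal_le_ofReal (by linarith [abs_sub_le z y x])
    _ ≤ _ := ENNReal.ofReal_add_le.trans (add_le_add ENNReal.ofReal_add_le le_rfl)

theorem ENNReal.abs_toReal_sub_toReal_le {a b d : ℝ≥0∞} (hab : a ≤ b) (hb : b ≤ a + d)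
    (hd : d ≠ ⊤) : |b.toReal - a.toReal| ≤ d.toReal := by
  rcases eq_or_ne a ⊤ with rfl | ha
  · simp [top_le_iff.mp hab]
  have hb_ne : b ≠ ⊤ := ne_top_of_le_ne_top (add_ne_top.mpr ⟨ha, hd⟩) hb
  have hle : b.toReal ≤ a.toReal + d.toReal := by
    rw [← toReal_add ha hd]
    exact toReal_mono (add_ne_top.mpr ⟨ha, hd⟩) hb
  rw [abs_of_nonneg (sub_nonneg.mpr (toReal_mono hb_ne hab))]
  linarith

abbrev IccPartition (a b : ℝ) : Type :=
  Σ n : ℕ, {t : Fin (n + 1) → ℝ // Monotone t ∧ ∀ i, t i ∈ Icc a b}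

theorem IccPartition.nonempty {a b : ℝ} (hab : a ≤ b) : Nonempty (IccPartition a b) :=
  ⟨⟨0, fun _ => a, monotone_const, fun _ => ⟨le_rfl, hab⟩⟩⟩

section TruncatedVariation

variable {f : ℝ → ℝ} {c : ℝ} {x : ℕ → ℝ} {t : ℝ}

theorem TV_eq_iSup_IccPartition (a b : ℝ) :
    TV f a b c = ⨆ p : IccPartition a b,
      ∑ i : Fin p.1, ENNReal.ofReal (|f (p.2.1 i.succ) - f (p.2.1 i.castSucc)| - c) := by
  simp only [TV, iSup_sigma, iSup_subtype, iSup_and]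

theorem sum_le_TV {a b : ℝ} {n : ℕ} {t : Fin (n + 1) → ℝ} (ht : Monotone t)
    (hta : ∀ i, t i ∈ Icc a b) :
    ∑ i : Fin n, ENNReal.ofReal (|f (t i.succ) - f (t i.castSucc)| - c) ≤ TV f a b c :=
  le_iSup_of_le n <| le_iSup_of_le t <| le_iSup_of_le ht <| le_iSup_of_le hta le_rfl

theorem TV_add_TV_le {a m b : ℝ} (ham : a ≤ m) (hmb : m ≤ b) :
    TV f a m c + TV f m b c ≤ TV f a b c := by
  have := IccPartition.nonempty ham
  have := IccPartition.nonempty hmb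
  rw [TV_eq_iSup_IccPartition, TV_eq_iSup_IccPartition]
  refine ENNReal.iSup_add_iSup_le fun ⟨n, t, ht, hta⟩ ⟨p, s, hs, hsb⟩ => ?_
  refine (sum_add_sum_le_sum_append (fun y x => ENNReal.ofReal (|f y - f x| - c)) t s).trans
    (sum_le_TV ?_ ?_)
  · exact ht.fin_append hs ((hta _).2.trans (hsb 0).1)
  · exact Fin.append_mem (fun i => Icc_subset_Icc_right hmb (hta i))
      (fun i => Icc_subset_Icc_left ham (hsb i))

theorem ofReal_abs_sub_sub_le_min_max {u v : ℝ} (huv : u ≤ v) (m : ℝ) :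
    ENNReal.ofReal (|f v - f u| - c) ≤
      ENNReal.ofReal (|f (min v m) - f (min u m)| - c) +
        ENNReal.ofReal (|f (max v m) - f (max u m)| - c) +
          if u < m ∧ m < v then ENNReal.ofReal c else 0 := by
  split_ifs with hm
  · rw [min_eq_right hm.2.le, min_eq_left hm.1.le, max_eq_left hm.2.le, max_eq_right hm.1.le]
    exact ENNReal.ofReal_abs_sub_sub_le _ _ _ c
  · rw [add_zero]
    rcases le_or_gt m u with hmu | hum
    · rw [max_eq_left (hmu.trans huv), max_eq_left hmu]
      exact le_add_self
    · rw [min_eq_left (not_lt.mp fun hmv => hm ⟨hum, hmv⟩), min_eq_left hum.le]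
      exact le_self_add

theorem TV_le_TV_add_TV_add {a m b : ℝ} (ham : a ≤ m) (hmb : m ≤ b) :
    TV f a b c ≤ TV f a m c + TV f m b c + ENNReal.ofReal c := by
  refine iSup_le fun n => iSup_le fun t => iSup_le fun ht => iSup_le fun hta => ?_
  calc ∑ i : Fin n, ENNReal.ofReal (|f (t i.succ) - f (t i.castSucc)| - c)
      ≤ ∑ i : Fin n, (ENNReal.ofReal (|f (min (t i.succ) m) - f (min (t i.castSucc) m)| - c) +
          ENNReal.ofReal (|f (max (t i.succ) m) - f (max (t i.castSucc) m)| - c) +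
            if t i.castSucc < m ∧ m < t i.succ then ENNReal.ofReal c else 0) :=
        sum_le_sum fun i _ => ofReal_abs_sub_sub_le_min_max (ht i.castSucc_le_succ) m
    _ = ∑ i : Fin n, ENNReal.ofReal (|f (min (t i.succ) m) - f (min (t i.castSucc) m)| - c) +
          ∑ i : Fin n, ENNReal.ofReal (|f (max (t i.succ) m) - f (max (t i.castSucc) m)| - c) +
            #{i : Fin n | t i.castSucc < m ∧ m < t i.succ} • ENNReal.ofReal c := by
        simp only [sum_add_distrib, sum_ite, sum_const, smul_zero, add_zero]
    _ ≤ TV f a m c + TV f m b c + ENNReal.ofReal c := by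
        gcongr
        · exact sum_le_TV (t := fun j => min (t j) m) (ht.min monotone_const)
            fun i => ⟨le_min (hta i).1 ham, min_le_right _ _⟩
        · exact sum_le_TV (t := fun j => max (t j) m) (ht.max monotone_const)
            fun i => ⟨le_max_right _ _, max_le (hta i).2 hmb⟩
        · exact (nsmul_le_nsmul_left zero_le (card_filter_lt_lt_le_one ht m)).trans
            (one_nsmul _).le

theorem sum_TV_add_TV_le (hx : Monotone x) {k : ℕ} (hk : x k ≤ t) :
    ∑ i ∈ range k, TV f (x i) (x (i + 1)) c + TV f (x k) t c ≤ TV f (x 0) t c := by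
  induction k with
  | zero => simp
  | succ k ih =>
    have hk' : x k ≤ x (k + 1) := hx k.le_succ
    calc ∑ i ∈ range (k + 1), TV f (x i) (x (i + 1)) c + TV f (x (k + 1)) t c
        = ∑ i ∈ range k, TV f (x i) (x (i + 1)) c +
            (TV f (x k) (x (k + 1)) c + TV f (x (k + 1)) t c) := by
          rw [sum_range_succ, add_assoc]
      _ ≤ ∑ i ∈ range k, TV f (x i) (x (i + 1)) c + TV f (x k) t c := by
          gcongr
          exact TV_add_TV_le hk' hk
      _ ≤ TV f (x 0) t c := ih (hk'.trans hk)

theorem TV_le_sum_TV_add_TV_add (hx : Monotone x) {k : ℕ} (hk : x k ≤ t) :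
    TV f (x 0) t c ≤
      ∑ i ∈ range k, TV f (x i) (x (i + 1)) c + TV f (x k) t c + k * ENNReal.ofReal c := by
  induction k with
  | zero => simp
  | succ k ih =>
    have hk' : x k ≤ x (k + 1) := hx k.le_succ
    calc TV f (x 0) t c
        ≤ ∑ i ∈ range k, TV f (x i) (x (i + 1)) c + TV f (x k) t c + k * ENNReal.ofReal c :=
          ih (hk'.trans hk)
      _ ≤ ∑ i ∈ range k, TV f (x i) (x (i + 1)) c +
            (TV f (x k) (x (k + 1)) c + TV f (x (k + 1)) t c + ENNReal.ofReal c) +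
              k * ENNReal.ofReal c := by
          gcongr
          exact TV_le_TV_add_TV_add hk' hk
      _ = ∑ i ∈ range (k + 1), TV f (x i) (x (i + 1)) c + TV f (x (k + 1)) t c +
            ↑(k + 1) * ENNReal.ofReal c := by
          rw [sum_range_succ]
          push_cast
          ring

end TruncatedVariation

theorem floor_mul_div_mul_div_le {T t : ℝ} (n : ℕ) (ht : 0 ≤ t) (hT : 0 ≤ T) :
    (⌊n * t / T⌋₊ : ℝ) * T / n ≤ t := by
  rcases hT.eq_or_lt with rfl | hT
  · simpa using ht
  rcases (Nat.zero_le n).eq_or_lt with rfl | hn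
  · simpa using ht
  have hn : (0 : ℝ) < n := Nat.cast_pos.mpr hn
  calc (⌊n * t / T⌋₊ : ℝ) * T / n ≤ n * t / T * T / n := by
        gcongr
        exact Nat.floor_le (by positivity)
    _ = t := by field_simp

theorem floor_mul_div_le {T t : ℝ} (n : ℕ) (ht : 0 ≤ t) (htT : t ≤ T) :
    ⌊n * t / T⌋₊ ≤ n := by
  refine Nat.floor_le_of_le ?_
  rcases (ht.trans htT).eq_or_lt with rfl | hT
  · simp
  · rw [div_le_iff₀ hT]
    gcongr

theorem monotone_mul_div {T : ℝ} (hT : 0 ≤ T) (n : ℕ) :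
    Monotone fun i : ℕ => (i : ℝ) * T / n :=
  fun _ _ hij => by dsimp only; gcongr

section Approximation

variable (f : ℝ → ℝ) {T : ℝ} (c : ℝ) {t : ℝ}

theorem ATV_le_TV (n : ℕ) (ht : t ∈ Icc 0 T) : ATV f T n c t ≤ TV f 0 t c := by
  have hT := ht.1.trans ht.2
  simpa [ATV] using sum_TV_add_TV_le (f := f) (c := c) (monotone_mul_div hT n)
    (floor_mul_div_mul_div_le n ht.1 hT)

theorem TV_le_ATV_add (n : ℕ) (ht : t ∈ Icc 0 T) :
    TV f 0 t c ≤ ATV f T n c t + n * ENNReal.ofReal c := by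
  have hT := ht.1.trans ht.2
  calc TV f 0 t c ≤ ATV f T n c t + ⌊n * t / T⌋₊ * ENNReal.ofReal c := by
        simpa [ATV] using TV_le_sum_TV_add_TV_add (f := f) (c := c) (monotone_mul_div hT n)
          (floor_mul_div_mul_div_le n ht.1 hT)
    _ ≤ ATV f T n c t + n * ENNReal.ofReal c := by
        gcongr
        exact floor_mul_div_le n ht.1 ht.2

end Approximation

theorem approximated_truncated_variation_estimate_general
    (T c : ℝ) (n : ℕ) (f : ℝ → ℝ) :
    (∀ t ∈ Set.Icc (0:ℝ) T,
      ATV f T n c t ≤ TV f 0 t c ∧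
      TV f 0 t c ≤ ATV f T n c t + (n : ℝ≥0∞) * ENNReal.ofReal c) ∧
    Tendsto
      (fun c' : ℝ => ⨆ t : Set.Icc (0:ℝ) T, |(TV f 0 t c').toReal - (ATV f T n c' t).toReal|)
      (𝓝[>] (0 : ℝ)) (𝓝 0) := by
  refine ⟨fun t ht => ⟨ATV_le_TV f c n ht, TV_le_ATV_add f c n ht⟩, ?_⟩
  have hbound : ∀ᶠ c' in 𝓝[>] (0 : ℝ),
      ⨆ t : Icc (0 : ℝ) T, |(TV f 0 t c').toReal - (ATV f T n c' t).toReal| ≤ n * c' := by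
    filter_upwards [self_mem_nhdsWithin] with c' (hc' : 0 < c')
    refine Real.iSup_le (fun t => ?_) (by positivity)
    have h := ENNReal.abs_toReal_sub_toReal_le (ATV_le_TV f c' n t.2)
      (TV_le_ATV_add f c' n t.2) (by finiteness)
    rwa [ENNReal.toReal_mul, ENNReal.toReal_natCast, ENNReal.toReal_ofReal hc'.le] at h
  refine squeeze_zero' (.of_forall fun _ => Real.iSup_nonneg fun _ => abs_nonneg _) hbound ?_
  simpa using ((continuous_const_mul (n : ℝ)).tendsto 0).mono_left nhdsWithin_le_nhds

/-- For càdlàg `f` on `[0,T]`, `c > 0` and `n ≥ 1`: for every `t ∈ [0,T]`,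
`ATV^{n,c}(t) ≤ TV^c(f,[0,t]) ≤ ATV^{n,c}(t) + nc`; in particular, for fixed `n`,
`sup_{t ∈ [0,T]} |TV^c(f,[0,t]) − ATV^{n,c}(t)| → 0` as `c ↘ 0`. -/
theorem approximated_truncated_variation_estimate
    (T c : ℝ) (hT : 0 < T) (hc : 0 < c) (n : ℕ) (hn : 0 < n)
    (f : ℝ → ℝ) (hf : Cadlag f 0 T) :
    (∀ t ∈ Set.Icc (0:ℝ) T,
      ATV f T n c t ≤ TV f 0 t c ∧
      TV f 0 t c ≤ ATV f T n c t + (n : ℝ≥0∞) * ENNReal.ofReal c) ∧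
    Tendsto
      (fun c' : ℝ => ⨆ t : Set.Icc (0:ℝ) T, |(TV f 0 t c').toReal - (ATV f T n c' t).toReal|)
      (𝓝[>] (0 : ℝ)) (𝓝 0) :=
  approximated_truncated_variation_estimate_general T c n f
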